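/- For every finite product subset M = M₁×M₂ ⊂ D₁×D₂, the squared coefficients of η in the tensor basis satisfy Σ_{i,i'∈M} c_{ii'}² ≤ Δ_Y² ‖η‖_∞² |M|, where c_{ii'} = ∭ p_i(x,y₁) p_{i'}(x,y₂) η(x,y₁,y₂) dx dy₁ dy₂. -/

import Mathlib

/-!
Write `p_i = α_{i₁} ⊗ β_{i₂}`, an orthonormal family in `L²([a,b] × [c,d])`, and
`(T p)(x, y) = ∫ p(x, u) η(x, y, u) du`. By Fubini `c_{ii'} = ⟪p_i, T p_{i'}⟫`, so Bessel's
inequality gives `Σ_i c_{ii'}² ≤ ‖T p_{i'}‖²`. Cauchy–Schwarz in `u` bounds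
`(T p_{i'})(x, y)²` by `α_{i'₁}(x)² Δ_Y ‖η‖_∞²`, whence `‖T p_{i'}‖² ≤ Δ_Y² ‖η‖_∞²`; summing over
`i' ∈ M` gives the claim.
-/

open MeasureTheory ProbabilityTheory Filter Set Topology

noncomputable section

namespace DaVeigaGamboa

/-- Iterated double integral over `[a,b] × [c,d]`. -/
def I2 (a b c d : ℝ) (h : ℝ → ℝ → ℝ) : ℝ :=
  ∫ x in Icc a b, ∫ y in Icc c d, h x y

/-- Iterated triple integral over `[a,b] × [c,d] × [c,d]`. -/
def I3 (a b c d : ℝ) (h : ℝ → ℝ → ℝ → ℝ) : ℝ :=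
  ∫ x in Icc a b, ∫ y₁ in Icc c d, ∫ y₂ in Icc c d, h x y₁ y₂

/-- The tensor basis `p_i(x,y) = α_{i₁}(x) β_{i₂}(y)`. -/
def tns {ι₁ ι₂ : Type*} (α : ι₁ → ℝ → ℝ) (β : ι₂ → ℝ → ℝ) (i : ι₁ × ι₂)
    (x y : ℝ) : ℝ := α i.1 x * β i.2 y

/-- Coefficient `∬ h p_i` of `h` on the basis element `p_i`. -/
def coef {ι : Type*} (a b c d : ℝ) (p : ι → ℝ → ℝ → ℝ) (h : ℝ → ℝ → ℝ) (i : ι) : ℝ :=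
  I2 a b c d fun x y => h x y * p i x y

/-- Orthogonal projection `S_M h` onto the span of `(p_i)_{i ∈ M}`. -/
def SM {ι : Type*} (a b c d : ℝ) (p : ι → ℝ → ℝ → ℝ) (h : ℝ → ℝ → ℝ)
    (M : Finset ι) (x y : ℝ) : ℝ := ∑ i ∈ M, coef a b c d p h i * p i x y

/-- `L²` norm on the rectangle. -/
def norm2 (a b c d : ℝ) (h : ℝ → ℝ → ℝ) : ℝ :=
  Real.sqrt (I2 a b c d fun x y => (h x y) ^ 2)

/-- The quadratic functional `θ(f) = ∭ η(x,y₁,y₂) f(x,y₁) f(x,y₂)`. -/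
def theta (a b c d : ℝ) (η : ℝ → ℝ → ℝ → ℝ) (f : ℝ → ℝ → ℝ) : ℝ :=
  I3 a b c d fun x y₁ y₂ => η x y₁ y₂ * f x y₁ * f x y₂

/-- `g(x,y) = ∫ f(x,u) η(x,y,u) du`. -/
def gfun (c d : ℝ) (η : ℝ → ℝ → ℝ → ℝ) (f : ℝ → ℝ → ℝ) (x y : ℝ) : ℝ :=
  ∫ u in Icc c d, f x u * η x y u

/-- The efficient asymptotic variance `Λ(f,η)`. -/
def Lam (a b c d : ℝ) (η : ℝ → ℝ → ℝ → ℝ) (f : ℝ → ℝ → ℝ) : ℝ :=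
  4 * ((I2 a b c d fun x y => (gfun c d η f x y) ^ 2 * f x y)
    - (I2 a b c d fun x y => gfun c d η f x y * f x y) ^ 2)

/-- The constants `c_{ii'} = ∭ p_i(x,y₁) p_{i'}(x,y₂) η(x,y₁,y₂)`. -/
def cmat {ι : Type*} (a b c d : ℝ) (p : ι → ℝ → ℝ → ℝ) (η : ℝ → ℝ → ℝ → ℝ)
    (i i' : ι) : ℝ :=
  I3 a b c d fun x y₁ y₂ => p i x y₁ * p i' x y₂ * η x y₁ y₂

/-- `b_i = ∬ g p_i`. -/
def bcoef {ι : Type*} (a b c d : ℝ) (p : ι → ℝ → ℝ → ℝ) (η : ℝ → ℝ → ℝ → ℝ)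
    (f : ℝ → ℝ → ℝ) (i : ι) : ℝ :=
  coef a b c d p (gfun c d η f) i

/-- The estimator `θ̂_n` of the crossed quadratic functional, built on the index set `M`
and the first `n` observations. -/
def thetaHat {Ω ι : Type*} (a b c d : ℝ) (p : ι → ℝ → ℝ → ℝ)
    (η : ℝ → ℝ → ℝ → ℝ) (X Y : ℕ → Ω → ℝ) (M : Finset ι) (n : ℕ) (ω : Ω) : ℝ :=
  (2 / ((n : ℝ) * ((n : ℝ) - 1))) *
    ∑ i ∈ M, ∑ j ∈ Finset.range n, ∑ k ∈ (Finset.range n).erase j,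
      p i (X j ω) (Y j ω) *
        ∫ u in Icc c d, p i (X k ω) u * η (X k ω) u (Y k ω)
  - (1 / ((n : ℝ) * ((n : ℝ) - 1))) *
    ∑ i ∈ M, ∑ i' ∈ M, ∑ j ∈ Finset.range n, ∑ k ∈ (Finset.range n).erase j,
      p i (X j ω) (Y j ω) * p i' (X k ω) (Y k ω) * cmat a b c d p η i i'

/-- The law `ν_f` on `ℝ²` with density `f` w.r.t. the Lebesgue measure. -/
def nu (f : ℝ → ℝ → ℝ) : Measure (ℝ × ℝ) :=
  volume.withDensity fun q => ENNReal.ofReal (f q.1 q.2)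

/-- Centered kernels of the Hoeffding decomposition: `q_i = p_i - a_i`. -/
def qfun {ι : Type*} (a b c d : ℝ) (p : ι → ℝ → ℝ → ℝ) (f : ℝ → ℝ → ℝ)
    (i : ι) (x y : ℝ) : ℝ := p i x y - coef a b c d p f i

/-- `r_i(x,y) = ∫ p_i(x,u) η(x,u,y) du - b_i`. -/
def rfun {ι : Type*} (a b c d : ℝ) (p : ι → ℝ → ℝ → ℝ) (η : ℝ → ℝ → ℝ → ℝ)
    (f : ℝ → ℝ → ℝ) (i : ι) (x y : ℝ) : ℝ :=
  (∫ u in Icc c d, p i x u * η x u y) - bcoef a b c d p η f i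

/-- The degenerate second-order kernel `K = 2QᵀR − QᵀCQ`. -/
def Kker {ι : Type*} (a b c d : ℝ) (p : ι → ℝ → ℝ → ℝ) (η : ℝ → ℝ → ℝ → ℝ)
    (f : ℝ → ℝ → ℝ) (M : Finset ι) (x₁ y₁ x₂ y₂ : ℝ) : ℝ :=
  2 * ∑ i ∈ M, qfun a b c d p f i x₁ y₁ * rfun a b c d p η f i x₂ y₂
  - ∑ i ∈ M, ∑ i' ∈ M,
      qfun a b c d p f i x₁ y₁ * cmat a b c d p η i i' * qfun a b c d p f i' x₂ y₂

/-- The first-order kernel `L = 2AᵀR + 2BᵀQ − 2AᵀCQ`. -/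
def Lker {ι : Type*} (a b c d : ℝ) (p : ι → ℝ → ℝ → ℝ) (η : ℝ → ℝ → ℝ → ℝ)
    (f : ℝ → ℝ → ℝ) (M : Finset ι) (x y : ℝ) : ℝ :=
  2 * ∑ i ∈ M, coef a b c d p f i * rfun a b c d p η f i x y
  + 2 * ∑ i ∈ M, bcoef a b c d p η f i * qfun a b c d p f i x y
  - 2 * ∑ i ∈ M, ∑ i' ∈ M,
      coef a b c d p f i * cmat a b c d p η i i' * qfun a b c d p f i' x y

/-- The degenerate U-statistic part `U_n K`. -/
def UnK {Ω ι : Type*} (a b c d : ℝ) (p : ι → ℝ → ℝ → ℝ) (η : ℝ → ℝ → ℝ → ℝ)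
    (f : ℝ → ℝ → ℝ) (X Y : ℕ → Ω → ℝ) (M : Finset ι) (n : ℕ) (ω : Ω) : ℝ :=
  (1 / ((n : ℝ) * ((n : ℝ) - 1))) *
    ∑ j ∈ Finset.range n, ∑ k ∈ (Finset.range n).erase j,
      Kker a b c d p η f M (X j ω) (Y j ω) (X k ω) (Y k ω)

/-- The empirical-mean part `P_n L`. -/
def PnL {Ω ι : Type*} (a b c d : ℝ) (p : ι → ℝ → ℝ → ℝ) (η : ℝ → ℝ → ℝ → ℝ)
    (f : ℝ → ℝ → ℝ) (X Y : ℕ → Ω → ℝ) (M : Finset ι) (n : ℕ) (ω : Ω) : ℝ :=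
  (1 / (n : ℝ)) * ∑ j ∈ Finset.range n,
    Lker a b c d p η f M (X j ω) (Y j ω)

/-- Membership of `h` in the ellipsoid `E` associated with the positive sequence `cseq`,
expressed through the coefficients of `h` in the orthonormal basis `(p_i)`. -/
def inEllipsoid {ι : Type*} (a b c d : ℝ) (p : ι → ℝ → ℝ → ℝ) (cseq : ι → ℝ)
    (h : ℝ → ℝ → ℝ) : Prop :=
  Summable (fun i => (coef a b c d p h i / cseq i) ^ 2) ∧
    ∑' i, (coef a b c d p h i / cseq i) ^ 2 ≤ 1

/-- `sup_{i ∉ M} |c_i|²`. -/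
def supTail {ι : Type*} (cseq : ι → ℝ) (M : Finset ι) : ℝ :=
  sSup ((fun i => (cseq i) ^ 2) '' {i | i ∉ M})

/-- Convergence in distribution of real random variables towards the law `ν`,
tested against bounded continuous functions. -/
def CvgInDist {Ω : Type*} [MeasurableSpace Ω] (μ : Measure Ω)
    (Z : ℕ → Ω → ℝ) (ν : Measure ℝ) : Prop :=
  ∀ g : ℝ → ℝ, Continuous g → (∃ C, ∀ x, |g x| ≤ C) →
    Tendsto (fun n => ∫ ω, g (Z n ω) ∂μ) atTop (𝓝 (∫ x, g x ∂ν))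


/-- Conditional expectation `m(x) = ∫ φ(y) f(x,y) dy / ∫ f(x,y) dy` of `φ(Y)` given `X = x`. -/
def mfun (c d : ℝ) (φ : ℝ → ℝ) (f : ℝ → ℝ → ℝ) (x : ℝ) : ℝ :=
  (∫ y in Icc c d, φ y * f x y) / ∫ y in Icc c d, f x y

/-- Conditional second moment `v(x) = ∫ φ(y)² f(x,y) dy / ∫ f(x,y) dy`. -/
def vfun (c d : ℝ) (φ : ℝ → ℝ) (f : ℝ → ℝ → ℝ) (x : ℝ) : ℝ :=
  (∫ y in Icc c d, φ y ^ 2 * f x y) / ∫ y in Icc c d, f x y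

/-- The functional `T(f) = ∬ ψ(m(x)) f(x,y) dx dy = E[ψ(E(φ(Y)|X))]`. -/
def Tfunc (a b c d : ℝ) (φ ψ : ℝ → ℝ) (f : ℝ → ℝ → ℝ) : ℝ :=
  I2 a b c d fun x y => ψ (mfun c d φ f x) * f x y

/-- The linear kernel `H(h,x,y) = [φ(y) − m_h(x)] ψ'(m_h(x)) + ψ(m_h(x))`. -/
def Hker (c d : ℝ) (φ ψ : ℝ → ℝ) (h : ℝ → ℝ → ℝ) (x y : ℝ) : ℝ :=
  (φ y - mfun c d φ h x) * deriv ψ (mfun c d φ h x) + ψ (mfun c d φ h x)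

/-- The second-order kernel
`K(h,x,y,z) = (1/2) ψ''(m_h(x)) (m_h(x)−φ(y)) (m_h(x)−φ(z)) / ∫ h(x,u) du`. -/
def Kfker (c d : ℝ) (φ ψ : ℝ → ℝ) (h : ℝ → ℝ → ℝ) (x y z : ℝ) : ℝ :=
  (1 / 2) * deriv (deriv ψ) (mfun c d φ h x) * (mfun c d φ h x - φ y) *
    (mfun c d φ h x - φ z) / ∫ u in Icc c d, h x u

/-- The efficient asymptotic variance
`C(f) = E(Var(φ(Y)|X) [ψ'(E(φ(Y)|X))]²) + Var(ψ(E(φ(Y)|X)))` expressed with `f`. -/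
def Cvar (a b c d : ℝ) (φ ψ : ℝ → ℝ) (f : ℝ → ℝ → ℝ) : ℝ :=
  I2 a b c d (fun x y =>
    (vfun c d φ f x - mfun c d φ f x ^ 2) * deriv ψ (mfun c d φ f x) ^ 2 * f x y)
  + (I2 a b c d (fun x y => ψ (mfun c d φ f x) ^ 2 * f x y)
      - (I2 a b c d fun x y => ψ (mfun c d φ f x) * f x y) ^ 2)

/-- `L^q` norm on the rectangle. -/
def normLq (a b c d q : ℝ) (h : ℝ → ℝ → ℝ) : ℝ :=
  (I2 a b c d fun x y => |h x y| ^ q) ^ (1 / q)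

/-- `2 AᵀB − AᵀCA`, the deterministic part of the Hoeffding decomposition. -/
def ABterm {ι : Type*} (a b c d : ℝ) (p : ι → ℝ → ℝ → ℝ) (η : ℝ → ℝ → ℝ → ℝ)
    (f : ℝ → ℝ → ℝ) (M : Finset ι) : ℝ :=
  2 * ∑ i ∈ M, coef a b c d p f i * bcoef a b c d p η f i
  - ∑ i ∈ M, ∑ i' ∈ M,
      coef a b c d p f i * cmat a b c d p η i i' * coef a b c d p f i'

/-- Crossed-quadratic-functional estimator with a (possibly random) kernel `ηω`,
built on the `n₂` observations of indices `n₀, …, n₀ + n₂ − 1`. -/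
def QHatK {Ω ι : Type*} (a b c d : ℝ) (p : ι → ℝ → ℝ → ℝ)
    (ηω : Ω → ℝ → ℝ → ℝ → ℝ) (X Y : ℕ → Ω → ℝ) (M : Finset ι)
    (n₀ n₂ : ℕ) (ω : Ω) : ℝ :=
  (2 / ((n₂ : ℝ) * ((n₂ : ℝ) - 1))) *
    ∑ i ∈ M, ∑ j ∈ Finset.range n₂, ∑ k ∈ (Finset.range n₂).erase j,
      p i (X (n₀ + j) ω) (Y (n₀ + j) ω) *
        ∫ u in Icc c d, p i (X (n₀ + k) ω) u * ηω ω (X (n₀ + k) ω) u (Y (n₀ + k) ω)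
  - (1 / ((n₂ : ℝ) * ((n₂ : ℝ) - 1))) *
    ∑ i ∈ M, ∑ i' ∈ M, ∑ j ∈ Finset.range n₂, ∑ k ∈ (Finset.range n₂).erase j,
      p i (X (n₀ + j) ω) (Y (n₀ + j) ω) * p i' (X (n₀ + k) ω) (Y (n₀ + k) ω) *
        I3 a b c d fun x y₁ y₂ => p i x y₁ * p i' x y₂ * ηω ω x y₁ y₂

/-- The estimator `T̂_n` of `T(f)`, built from the preliminary estimator `fhat`
and the `n₂` observations of indices `n₀, …, n₀ + n₂ − 1`. -/
def THat {Ω ι : Type*} (a b c d : ℝ) (p : ι → ℝ → ℝ → ℝ) (φ ψ : ℝ → ℝ)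
    (fhat : Ω → ℝ → ℝ → ℝ) (X Y : ℕ → Ω → ℝ) (M : Finset ι)
    (n₀ n₂ : ℕ) (ω : Ω) : ℝ :=
  (1 / (n₂ : ℝ)) * ∑ j ∈ Finset.range n₂,
      Hker c d φ ψ (fhat ω) (X (n₀ + j) ω) (Y (n₀ + j) ω)
  + QHatK a b c d p (fun ω' => Kfker c d φ ψ (fhat ω')) X Y M n₀ n₂ ω

end DaVeigaGamboa

namespace MeasureTheory

variable {X : Type*} [MeasurableSpace X] {μ : Measure X}

theorem MemLp.inner_toLp_eq_integral {f g : X → ℝ} (hf : MemLp f 2 μ) (hg : MemLp g 2 μ) :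
    inner ℝ (hf.toLp f) (hg.toLp g) = ∫ x, f x * g x ∂μ := by
  rw [L2.inner_def]
  refine integral_congr_ae ?_
  filter_upwards [hf.coeFn_toLp, hg.coeFn_toLp] with x hfx hgx
  simp [hfx, hgx, mul_comm]

theorem MemLp.norm_toLp_sq_eq_integral {f : X → ℝ} (hf : MemLp f 2 μ) :
    ‖hf.toLp f‖ ^ 2 = ∫ x, f x ^ 2 ∂μ := by
  rw [← real_inner_self_eq_norm_sq, hf.inner_toLp_eq_integral]
  simp only [sq]

theorem integrable_sq_of_integral_mul_self_eq_one {f : X → ℝ} (h : ∫ x, f x * f x ∂μ = 1) :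
    Integrable (fun x => f x ^ 2) μ := by
  simpa only [sq] using Integrable.of_integral_ne_zero (h ▸ one_ne_zero)

theorem memLp_two_of_integral_mul_self_eq_one {f : X → ℝ} (hf : AEStronglyMeasurable f μ)
    (h : ∫ x, f x * f x ∂μ = 1) : MemLp f 2 μ :=
  (memLp_two_iff_integrable_sq hf).2 (integrable_sq_of_integral_mul_self_eq_one h)

theorem sq_integral_mul_le_integral_sq_mul_integral_sq {f g : X → ℝ} (hf : MemLp f 2 μ)
    (hg : MemLp g 2 μ) :
    (∫ x, f x * g x ∂μ) ^ 2 ≤ (∫ x, f x ^ 2 ∂μ) * ∫ x, g x ^ 2 ∂μ := by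
  rw [← hf.inner_toLp_eq_integral hg, ← hf.norm_toLp_sq_eq_integral,
    ← hg.norm_toLp_sq_eq_integral, ← mul_pow, ← sq_abs]
  gcongr
  exact abs_real_inner_le_norm _ _

theorem sum_sq_integral_mul_le_integral_sq {ι : Type*} [DecidableEq ι] {e : ι → X → ℝ}
    (he : ∀ i, MemLp (e i) 2 μ)
    (horth : ∀ i j, ∫ x, e i x * e j x ∂μ = if i = j then 1 else 0)
    {g : X → ℝ} (hg : MemLp g 2 μ) (s : Finset ι) :
    ∑ i ∈ s, (∫ x, e i x * g x ∂μ) ^ 2 ≤ ∫ x, g x ^ 2 ∂μ := by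
  have hon : Orthonormal ℝ fun i => (he i).toLp (e i) := by
    rw [orthonormal_iff_ite]
    intro i j
    rw [(he i).inner_toLp_eq_integral (he j), horth]
  calc ∑ i ∈ s, (∫ x, e i x * g x ∂μ) ^ 2
      = ∑ i ∈ s, ‖inner ℝ ((he i).toLp (e i)) (hg.toLp g)‖ ^ 2 := by
        simp only [(he _).inner_toLp_eq_integral hg, Real.norm_eq_abs, sq_abs]
    _ ≤ ‖hg.toLp g‖ ^ 2 := hon.sum_inner_products_le _
    _ = ∫ x, g x ^ 2 ∂μ := hg.norm_toLp_sq_eq_integral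

theorem integral_sq_le_of_abs_le [IsFiniteMeasure μ] {f : X → ℝ} {C : ℝ}
    (hf : ∀ x, |f x| ≤ C) : ∫ x, f x ^ 2 ∂μ ≤ C ^ 2 * μ.real univ := by
  refine (Real.le_norm_self _).trans
    (norm_integral_le_of_norm_le_const (Eventually.of_forall fun x => ?_))
  rw [Real.norm_eq_abs, abs_pow]
  exact pow_le_pow_left₀ (abs_nonneg _) (hf x) 2

end MeasureTheory

namespace DaVeigaGamboa

section

variable {X Y : Type*} [MeasurableSpace Y] {ν : Measure Y}

def kernelApply (ν : Measure Y) (η : X → Y → Y → ℝ) (p : X → Y → ℝ) (x : X) (y : Y) : ℝ :=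
  ∫ u, p x u * η x y u ∂ν

theorem kernelApply_tensor {a : X → ℝ} {b : Y → ℝ} (η : X → Y → Y → ℝ) (x : X) (y : Y) :
    kernelApply ν η (fun x u => a x * b u) x y = a x * ∫ u, b u * η x y u ∂ν := by
  simp only [kernelApply, mul_assoc, integral_const_mul]

variable [MeasurableSpace X] {μ : Measure X}

theorem integral_prod_mul_kernelApply [SFinite μ] [SFinite ν] {η : X → Y → Y → ℝ}
    {p q : X → Y → ℝ}
    (hint : Integrable (fun z => p z.1 z.2 * kernelApply ν η q z.1 z.2) (μ.prod ν)) :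
    ∫ z, p z.1 z.2 * kernelApply ν η q z.1 z.2 ∂μ.prod ν
      = ∫ x, ∫ y₁, ∫ y₂, p x y₁ * q x y₂ * η x y₁ y₂ ∂ν ∂ν ∂μ := by
  rw [integral_prod _ hint]
  simp only [kernelApply, ← integral_const_mul, mul_assoc]

theorem stronglyMeasurable_kernelApply [SFinite ν] {η : X → Y → Y → ℝ} {p : X → Y → ℝ}
    (hp : Measurable (Function.uncurry p))
    (hη : Measurable fun q : X × Y × Y => η q.1 q.2.1 q.2.2) :
    StronglyMeasurable fun z : X × Y => kernelApply ν η p z.1 z.2 := by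
  have hpη : Measurable fun w : (X × Y) × Y => p w.1.1 w.2 * η w.1.1 w.1.2 w.2 :=
    (hp.comp (measurable_fst.fst.prodMk measurable_snd)).mul
      (hη.comp (measurable_fst.fst.prodMk (measurable_fst.snd.prodMk measurable_snd)))
  exact hpη.stronglyMeasurable.integral_prod_right'

section Tensor

variable {a : X → ℝ} {b : Y → ℝ}

theorem sq_kernelApply_tensor_le [IsFiniteMeasure ν] (hb : Measurable b)
    (hb1 : ∫ u, b u * b u ∂ν = 1) {η : X → Y → Y → ℝ}
    (hη : Measurable fun q : X × Y × Y => η q.1 q.2.1 q.2.2) {C : ℝ}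
    (hηC : ∀ x y u, |η x y u| ≤ C) (x : X) (y : Y) :
    kernelApply ν η (fun x u => a x * b u) x y ^ 2 ≤ a x ^ 2 * (C ^ 2 * ν.real univ) := by
  have hηL2 : MemLp (η x y) 2 ν :=
    .of_bound (hη.comp (measurable_const.prodMk measurable_prodMk_left)).aestronglyMeasurable C
      (ae_of_all _ fun u => hηC x y u)
  have hbL2 := memLp_two_of_integral_mul_self_eq_one hb.aestronglyMeasurable hb1
  have hb2 : ∫ u, b u ^ 2 ∂ν = 1 := by simpa only [sq] using hb1
  rw [kernelApply_tensor, mul_pow]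
  gcongr
  calc (∫ u, b u * η x y u ∂ν) ^ 2
      ≤ (∫ u, b u ^ 2 ∂ν) * ∫ u, η x y u ^ 2 ∂ν :=
        sq_integral_mul_le_integral_sq_mul_integral_sq hbL2 hηL2
    _ ≤ C ^ 2 * ν.real univ := by
        rw [hb2, one_mul]
        exact integral_sq_le_of_abs_le (hηC x y)

theorem memLp_kernelApply_tensor [SFinite μ] [IsFiniteMeasure ν] (ha : Measurable a)
    (ha1 : ∫ x, a x * a x ∂μ = 1) (hb : Measurable b) (hb1 : ∫ u, b u * b u ∂ν = 1)
    {η : X → Y → Y → ℝ} (hη : Measurable fun q : X × Y × Y => η q.1 q.2.1 q.2.2) {C : ℝ}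
    (hηC : ∀ x y u, |η x y u| ≤ C) :
    MemLp (fun z : X × Y => kernelApply ν η (fun x u => a x * b u) z.1 z.2) 2 (μ.prod ν) := by
  have hmeas := stronglyMeasurable_kernelApply (ν := ν) (p := fun x u => a x * b u)
    (by fun_prop) hη
  refine (memLp_two_iff_integrable_sq hmeas.aestronglyMeasurable).2 ?_
  have hdom : Integrable (fun z : X × Y => a z.1 ^ 2 * (C ^ 2 * ν.real univ)) (μ.prod ν) :=
    (integrable_sq_of_integral_mul_self_eq_one ha1).mul_prod (integrable_const _)
  refine hdom.mono' (hmeas.pow 2).aestronglyMeasurable (ae_of_all _ fun z => ?_)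
  rw [Real.norm_eq_abs, abs_sq]
  exact sq_kernelApply_tensor_le hb hb1 hη hηC z.1 z.2

theorem integral_sq_kernelApply_tensor_le [SFinite μ] [IsFiniteMeasure ν]
    (ha1 : ∫ x, a x * a x ∂μ = 1) (hb : Measurable b) (hb1 : ∫ u, b u * b u ∂ν = 1)
    {η : X → Y → Y → ℝ} (hη : Measurable fun q : X × Y × Y => η q.1 q.2.1 q.2.2) {C : ℝ}
    (hηC : ∀ x y u, |η x y u| ≤ C) :
    ∫ z, kernelApply ν η (fun x u => a x * b u) z.1 z.2 ^ 2 ∂μ.prod ν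
      ≤ C ^ 2 * ν.real univ ^ 2 := by
  have ha2 : ∫ x, a x ^ 2 ∂μ = 1 := by simpa only [sq] using ha1
  calc ∫ z, kernelApply ν η (fun x u => a x * b u) z.1 z.2 ^ 2 ∂μ.prod ν
      ≤ ∫ z, a z.1 ^ 2 * (C ^ 2 * ν.real univ) ∂μ.prod ν :=
        integral_mono_of_nonneg (ae_of_all _ fun _ => sq_nonneg _)
          ((integrable_sq_of_integral_mul_self_eq_one ha1).mul_prod (integrable_const _))
          (ae_of_all _ fun z => sq_kernelApply_tensor_le hb hb1 hη hηC z.1 z.2)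
    _ = C ^ 2 * ν.real univ ^ 2 := by
        rw [integral_fun_fst (f := fun x => a x ^ 2 * (C ^ 2 * ν.real univ)), integral_mul_const,
          ha2, smul_eq_mul]
        ring

end Tensor

section TensorBasis

variable {ι₁ ι₂ : Type*} [DecidableEq ι₁] [DecidableEq ι₂] {α : ι₁ → X → ℝ} {β : ι₂ → Y → ℝ}

theorem integral_prod_tensor_mul_tensor [SFinite μ] [SFinite ν]
    (hα : ∀ i j, ∫ x, α i x * α j x ∂μ = if i = j then 1 else 0)
    (hβ : ∀ i j, ∫ y, β i y * β j y ∂ν = if i = j then 1 else 0) (i j : ι₁ × ι₂) :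
    ∫ z, α i.1 z.1 * β i.2 z.2 * (α j.1 z.1 * β j.2 z.2) ∂μ.prod ν
      = if i = j then 1 else 0 := by
  have hsplit : ∀ z : X × Y, α i.1 z.1 * β i.2 z.2 * (α j.1 z.1 * β j.2 z.2)
      = α i.1 z.1 * α j.1 z.1 * (β i.2 z.2 * β j.2 z.2) := fun z => by ring
  rw [integral_congr_ae (ae_of_all _ hsplit), integral_prod_mul (fun x => α i.1 x * α j.1 x)
    (fun y => β i.2 y * β j.2 y), hα, hβ]
  simp only [Prod.ext_iff, ite_zero_mul_ite_zero, mul_one]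

theorem memLp_tensor [SFinite μ] [SFinite ν] (hαm : ∀ i, Measurable (α i))
    (hβm : ∀ i, Measurable (β i)) (hα : ∀ i j, ∫ x, α i x * α j x ∂μ = if i = j then 1 else 0)
    (hβ : ∀ i j, ∫ y, β i y * β j y ∂ν = if i = j then 1 else 0) (i : ι₁ × ι₂) :
    MemLp (fun z : X × Y => α i.1 z.1 * β i.2 z.2) 2 (μ.prod ν) :=
  memLp_two_of_integral_mul_self_eq_one
    (((hαm i.1).comp measurable_fst).mul ((hβm i.2).comp measurable_snd)).aestronglyMeasurable
    (by rw [integral_prod_tensor_mul_tensor hα hβ, if_pos rfl])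

theorem sum_sq_integral_tensor_kernel_le [SFinite μ] [IsFiniteMeasure ν]
    (hαm : ∀ i, Measurable (α i)) (hβm : ∀ i, Measurable (β i))
    (hα : ∀ i j, ∫ x, α i x * α j x ∂μ = if i = j then 1 else 0)
    (hβ : ∀ i j, ∫ y, β i y * β j y ∂ν = if i = j then 1 else 0)
    {η : X → Y → Y → ℝ} (hη : Measurable fun q : X × Y × Y => η q.1 q.2.1 q.2.2) {C : ℝ}
    (hηC : ∀ x y u, |η x y u| ≤ C) (s : Finset (ι₁ × ι₂)) (j : ι₁ × ι₂) :
    ∑ i ∈ s, (∫ x, ∫ y₁, ∫ y₂,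
        α i.1 x * β i.2 y₁ * (α j.1 x * β j.2 y₂) * η x y₁ y₂ ∂ν ∂ν ∂μ) ^ 2
      ≤ C ^ 2 * ν.real univ ^ 2 := by
  have hα1 : ∫ x, α j.1 x * α j.1 x ∂μ = 1 := by rw [hα, if_pos rfl]
  have hβ1 : ∫ y, β j.2 y * β j.2 y ∂ν = 1 := by rw [hβ, if_pos rfl]
  set g := fun z : X × Y => kernelApply ν η (fun x u => α j.1 x * β j.2 u) z.1 z.2
  have hg : MemLp g 2 (μ.prod ν) :=
    memLp_kernelApply_tensor (hαm j.1) hα1 (hβm j.2) hβ1 hη hηC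
  have hcoef : ∀ i : ι₁ × ι₂, (∫ x, ∫ y₁, ∫ y₂,
        α i.1 x * β i.2 y₁ * (α j.1 x * β j.2 y₂) * η x y₁ y₂ ∂ν ∂ν ∂μ)
      = ∫ z, α i.1 z.1 * β i.2 z.2 * g z ∂μ.prod ν := fun i =>
    (integral_prod_mul_kernelApply ((memLp_tensor hαm hβm hα hβ i).integrable_mul hg)).symm
  calc _ = ∑ i ∈ s, (∫ z, α i.1 z.1 * β i.2 z.2 * g z ∂μ.prod ν) ^ 2 := by simp only [hcoef]
    _ ≤ ∫ z, g z ^ 2 ∂μ.prod ν := sum_sq_integral_mul_le_integral_sq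
        (memLp_tensor hαm hβm hα hβ) (integral_prod_tensor_mul_tensor hα hβ) hg s
    _ ≤ C ^ 2 * ν.real univ ^ 2 := integral_sq_kernelApply_tensor_le hα1 (hβm j.2) hβ1 hη hηC

end TensorBasis

end

theorem cmat_sq_sum_bound_general
    {ι₁ ι₂ : Type*} [DecidableEq ι₁] [DecidableEq ι₂]
    (a b c d : ℝ) (hcd : c < d)
    (α : ι₁ → ℝ → ℝ) (β : ι₂ → ℝ → ℝ)
    (hαmeas : ∀ i, Measurable (α i)) (hβmeas : ∀ i, Measurable (β i))
    (hα : ∀ i j, (∫ x in Icc a b, α i x * α j x) = if i = j then 1 else 0)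
    (hβ : ∀ i j, (∫ y in Icc c d, β i y * β j y) = if i = j then 1 else 0)
    (η : ℝ → ℝ → ℝ → ℝ) (Cη : ℝ)
    (hηmeas : Measurable fun q : ℝ × ℝ × ℝ => η q.1 q.2.1 q.2.2)
    (hηbd : ∀ x y₁ y₂, |η x y₁ y₂| ≤ Cη)
    (M₁ : Finset ι₁) (M₂ : Finset ι₂) :
    ∑ i ∈ M₁ ×ˢ M₂, ∑ i' ∈ M₁ ×ˢ M₂, cmat a b c d (tns α β) η i i' ^ 2
      ≤ (d - c) ^ 2 * Cη ^ 2 * ((M₁ ×ˢ M₂).card : ℝ) := by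
  have hlength : (volume.restrict (Icc c d)).real univ = d - c := by
    rw [measureReal_restrict_apply_univ, Real.volume_real_Icc_of_le hcd.le]
  calc ∑ i ∈ M₁ ×ˢ M₂, ∑ i' ∈ M₁ ×ˢ M₂, cmat a b c d (tns α β) η i i' ^ 2
      = ∑ i' ∈ M₁ ×ˢ M₂, ∑ i ∈ M₁ ×ˢ M₂, cmat a b c d (tns α β) η i i' ^ 2 := Finset.sum_comm
    _ ≤ ∑ _i' ∈ M₁ ×ˢ M₂, (d - c) ^ 2 * Cη ^ 2 := Finset.sum_le_sum fun j _ =>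
        (sum_sq_integral_tensor_kernel_le hαmeas hβmeas hα hβ hηmeas hηbd (M₁ ×ˢ M₂) j).trans_eq
          (by rw [hlength, mul_comm])
    _ = (d - c) ^ 2 * Cη ^ 2 * ((M₁ ×ˢ M₂).card : ℝ) := by
        rw [Finset.sum_const, nsmul_eq_mul, mul_comm]

/-- Bessel-type bound for the coefficients of `η`,
`Σ_{i,i' ∈ M₁×M₂} c_{ii'}² ≤ Δ_Y² ‖η‖_∞² |M₁×M₂|`. -/
theorem cmat_sq_sum_bound
    {ι₁ ι₂ : Type*} [Countable ι₁] [Countable ι₂] [DecidableEq ι₁] [DecidableEq ι₂]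
    (a b c d : ℝ) (hab : a < b) (hcd : c < d)
    (α : ι₁ → ℝ → ℝ) (β : ι₂ → ℝ → ℝ)
    (hαmeas : ∀ i, Measurable (α i)) (hβmeas : ∀ i, Measurable (β i))
    (hα : ∀ i j, (∫ x in Icc a b, α i x * α j x) = if i = j then 1 else 0)
    (hβ : ∀ i j, (∫ y in Icc c d, β i y * β j y) = if i = j then 1 else 0)
    (η : ℝ → ℝ → ℝ → ℝ) (Cη : ℝ)
    (hηmeas : Measurable fun q : ℝ × ℝ × ℝ => η q.1 q.2.1 q.2.2)
    (hηbd : ∀ x y₁ y₂, |η x y₁ y₂| ≤ Cη)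
    (hηsym : ∀ x y₁ y₂, η x y₁ y₂ = η x y₂ y₁)
    (M₁ : Finset ι₁) (M₂ : Finset ι₂) :
    ∑ i ∈ M₁ ×ˢ M₂, ∑ i' ∈ M₁ ×ˢ M₂, cmat a b c d (tns α β) η i i' ^ 2
      ≤ (d - c) ^ 2 * Cη ^ 2 * ((M₁ ×ˢ M₂).card : ℝ) :=
  cmat_sq_sum_bound_general a b c d hcd α β hαmeas hβmeas hα hβ η Cη hηmeas hηbd M₁ M₂

end DaVeigaGamboa
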